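/- arXiv:2010.13667 — 4 statements merged into one kernel-verified Lean document; each statement's English description precedes it below -/
import Mathlib

section
/- Let k ≥ 5 be an integer and ℓ = ⌊(k-1)/2⌋. Let G be a 2-connected simple graph containing no cycle of length at least k, suppose the (ℓ-1)-disintegration H = H(G,ℓ-1) is non-empty, and let P = x₁x₂⋯x_m be an H-path of G with the maximum number of vertices among all H-paths, where m ≥ k. Then: (i) N_H(x₁) ⊆ N_P(x₁) and N_H(x_m) ⊆ N_P(x_m); (ii) d_P(x₁) ≥ d_H(x₁) ≥ ℓ and d_P(x_m) ≥ d_H(x_m) ≥ ℓ; (iii) N_P⁻(x₁) ∩ N_P[x_m] = ∅ and N_P⁺(x_m) ∩ N_P[x₁] = ∅. -/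
open SimpleGraph

variable {V : Type*}

/-- `x 1, …, x m` is a path in `G` (1-indexed): injective on `[1, m]`, with consecutive
vertices adjacent. -/
def IsIndexedPath (G : SimpleGraph V) (x : ℕ → V) (m : ℕ) : Prop :=
  (∀ i j, 1 ≤ i → i ≤ m → 1 ≤ j → j ≤ m → x i = x j → i = j) ∧
  ∀ i, 1 ≤ i → i < m → G.Adj (x i) (x (i + 1))

/-- The vertex set of the indexed path `x 1, …, x m`. -/
def pathVerts (x : ℕ → V) (m : ℕ) : Set V := {v | ∃ i, 1 ≤ i ∧ i ≤ m ∧ x i = v}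

/-- `N_P(v)`: the neighbours of `v` among the vertices of the path. -/
def pathNbrs (G : SimpleGraph V) (x : ℕ → V) (m : ℕ) (v : V) : Set V :=
  {u | u ∈ pathVerts x m ∧ G.Adj v u}

/-- `N_P⁻(x₁)`: immediate predecessors on `P` of the path-neighbours of `x₁`. -/
def predNbrs (G : SimpleGraph V) (x : ℕ → V) (m : ℕ) : Set V :=
  {v | ∃ i, 2 ≤ i ∧ i ≤ m ∧ G.Adj (x 1) (x i) ∧ v = x (i - 1)}

/-- `N_P⁺(x_m)`: immediate successors on `P` of the path-neighbours of `x_m`. -/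
def succNbrs (G : SimpleGraph V) (x : ℕ → V) (m : ℕ) : Set V :=
  {v | ∃ i, 1 ≤ i ∧ i < m ∧ G.Adj (x m) (x i) ∧ v = x (i + 1)}

/-- `G` contains no cycle of length at least `k`, i.e. `c(G) < k`. -/
def NoCycleGE (G : SimpleGraph V) (k : ℕ) : Prop :=
  ∀ (v : V) (w : G.Walk v v), w.IsCycle → w.length < k

/-- `G` contains a cycle of length at least `L`. -/
def HasCycleGE (G : SimpleGraph V) (L : ℕ) : Prop :=
  ∃ (v : V) (w : G.Walk v v), w.IsCycle ∧ L ≤ w.length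

/-- `G` is 2-connected: at least 3 vertices and deleting any single vertex leaves a
connected graph. -/
def TwoConnected (G : SimpleGraph V) [Fintype V] : Prop :=
  3 ≤ Fintype.card V ∧ ∀ v : V, (G.induce {u | u ≠ v}).Connected

/-- The vertex set of the `α`-disintegration `H(G, α)` of `G`: the largest vertex set on
which the induced subgraph has minimum degree at least `α + 1`. -/
noncomputable def disint (G : SimpleGraph V) (α : ℕ) : Set V :=
  ⋃₀ {S : Set V | ∀ v ∈ S, α + 1 ≤ {u | u ∈ S ∧ G.Adj v u}.ncard}

/-- `N_s(G)`: the number of `s`-cliques of `G`. -/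
noncomputable def cliqueCount (G : SimpleGraph V) (s : ℕ) : ℕ :=
  {S : Finset V | G.IsNClique s S}.ncard

/-- `h_s(n, k, a) = C(k - a, s) + (n - k + a) · C(a, s - 1)`. -/
def hval (n k a s : ℕ) : ℕ :=
  Nat.choose (k - a) s + (n - k + a) * Nat.choose a (s - 1)

/-- The graph `H(n, k, a)` on `Fin n`: the first `a` vertices form the set `A`, the next
`k - 2a` vertices form `C`, and the remaining `n - k + a` vertices form `B`; `A ∪ C` is a
clique and every vertex of `A` is joined to every vertex of `B`. -/
def Hgraph (n k a : ℕ) : SimpleGraph (Fin n) :=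
  SimpleGraph.fromRel fun i j =>
    (i.val < a ∧ k - a ≤ j.val) ∨ (i.val < k - a ∧ j.val < k - a)

/-- `G` is isomorphic to a subgraph of `H`. -/
def IsSubgraphOf {W : Type*} (G : SimpleGraph V) (H : SimpleGraph W) : Prop :=
  ∃ f : V → W, Function.Injective f ∧ ∀ a b, G.Adj a b → H.Adj (f a) (f b)

/-- Every connected component of `H` is a star: there is an assignment of a "center" to
each vertex such that every edge joins the common center of its endpoints to a leaf. -/
def IsStarForest (H : SimpleGraph V) : Prop :=
  ∃ f : V → V, ∀ a b, H.Adj a b → (f a = a ∧ f b = a) ∨ (f a = b ∧ f b = b)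

/-- `(i, j)` is a crossing pair of the indexed path `x 1, …, x m`. -/
def CrossPair (G : SimpleGraph V) (x : ℕ → V) (m i j : ℕ) : Prop :=
  1 ≤ i ∧ i < j ∧ j ≤ m ∧ G.Adj (x m) (x i) ∧ G.Adj (x 1) (x j)

/-- `(i, j)` is a minimal crossing pair of the indexed path `x 1, …, x m`. -/
def MinCrossPair (G : SimpleGraph V) (x : ℕ → V) (m i j : ℕ) : Prop :=
  CrossPair G x m i j ∧
    ∀ h, i < h → h < j → ¬G.Adj (x 1) (x h) ∧ ¬G.Adj (x m) (x h)

/-- One application of the successor operation along the path to a set of vertices. -/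
def succStep (x : ℕ → V) (m : ℕ) (S : Set V) : Set V :=
  {v | ∃ i, 1 ≤ i ∧ i < m ∧ x i ∈ S ∧ v = x (i + 1)}

/-- `N_P^{+i}(x_m)`: the `i`-fold iterated successor set of `N_P(x_m)` along the path. -/
def iterNbrSucc (G : SimpleGraph V) (x : ℕ → V) (m i : ℕ) : Set V :=
  (succStep x m)^[i] (pathNbrs G x m (x m))

/-!
An endpoint of a longest `D`-path has all its `D`-neighbours on the path, since otherwise the
path could be extended; and a vertex of `H(G, ℓ - 1)` has at least `ℓ` neighbours in it. A
crossing pair of edges `x_m x_a`, `x_1 x_{a+1}` would close the cycle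
`x_{a+1} ⋯ x_m x_a ⋯ x_1 x_{a+1}` through all `m ≥ k` vertices of `P`.
-/

theorem pathVerts_finite (x : ℕ → V) (m : ℕ) : (pathVerts x m).Finite :=
  ((Set.finite_Icc 1 m).image x).subset fun _ ⟨i, hi, him, hxi⟩ => ⟨i, ⟨hi, him⟩, hxi⟩

theorem pathNbrs_finite (G : SimpleGraph V) (x : ℕ → V) (m : ℕ) (v : V) :
    (pathNbrs G x m v).Finite :=
  (pathVerts_finite x m).subset fun _ hu => hu.1

theorem pathVerts_reverse (x : ℕ → V) (m : ℕ) :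
    pathVerts (fun i => x (m + 1 - i)) m = pathVerts x m := by
  ext v
  constructor <;> rintro ⟨i, hi, him, rfl⟩
  · exact ⟨m + 1 - i, by omega, by omega, rfl⟩
  · exact ⟨m + 1 - i, by omega, by omega, congrArg x (by omega)⟩

namespace IsIndexedPath

variable {G : SimpleGraph V} {x : ℕ → V} {m : ℕ}

theorem mono (hP : IsIndexedPath G x m) {n : ℕ} (hn : n ≤ m) : IsIndexedPath G x n :=
  ⟨fun i j hi hin hj hjn => hP.1 i j hi (hin.trans hn) hj (hjn.trans hn),
    fun i hi hin => hP.2 i hi (by omega)⟩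

theorem comp (hP : IsIndexedPath G x m) {n : ℕ} (f : ℕ → ℕ)
    (hf : ∀ i, 1 ≤ i → i ≤ n → 1 ≤ f i ∧ f i ≤ m)
    (hinj : ∀ i j, 1 ≤ i → i ≤ n → 1 ≤ j → j ≤ n → f i = f j → i = j)
    (hadj : ∀ i, 1 ≤ i → i < n → G.Adj (x (f i)) (x (f (i + 1)))) :
    IsIndexedPath G (x ∘ f) n := by
  refine ⟨fun i j hi hin hj hjn hij => hinj i j hi hin hj hjn ?_, hadj⟩
  exact hP.1 _ _ (hf i hi hin).1 (hf i hi hin).2 (hf j hj hjn).1 (hf j hj hjn).2 hij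

theorem reverse (hP : IsIndexedPath G x m) : IsIndexedPath G (fun i => x (m + 1 - i)) m :=
  hP.comp (fun i => m + 1 - i) (fun _ _ _ => by omega) (fun _ _ _ _ _ _ _ => by omega)
    fun i hi hin => by
      convert (hP.2 (m - i) (by omega) (by omega)).symm using 2 <;> omega

theorem snoc (hP : IsIndexedPath G x m) {u : V} (hu : u ∉ pathVerts x m)
    (h : G.Adj (x m) u) : IsIndexedPath G (Function.update x (m + 1) u) (m + 1) := by
  refine ⟨fun i j hi hin hj hjn hij => ?_, fun i hi hin => ?_⟩
  · simp only [Function.update_apply] at hij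
    split_ifs at hij with hi' hj' hj'
    · omega
    · exact absurd ⟨j, hj, by omega, hij.symm⟩ hu
    · exact absurd ⟨i, hi, by omega, hij⟩ hu
    · exact hP.1 i j hi (by omega) hj (by omega) hij
  · rcases (by omega : i < m ∨ i = m) with hi' | rfl
    · rw [Function.update_of_ne (by omega), Function.update_of_ne (by omega)]
      exact hP.2 i hi hi'
    · simpa using h

theorem exists_isPath (hP : IsIndexedPath G x m) (hm : 1 ≤ m) :
    ∃ p : G.Walk (x 1) (x m), p.IsPath ∧ p.length = m - 1 ∧
      ∀ v ∈ p.support, v ∈ pathVerts x m := by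
  induction m, hm using Nat.le_induction with
  | base => exact ⟨Walk.nil, by simp, rfl, by simpa using ⟨1, le_rfl, le_rfl, rfl⟩⟩
  | succ n hn ih =>
    obtain ⟨p, hp, hlen, hsupp⟩ := ih (hP.mono n.le_succ)
    have hnew : x (n + 1) ∉ p.support := fun hmem => by
      obtain ⟨i, hi, hin, hxi⟩ := hsupp _ hmem
      have := hP.1 i (n + 1) hi (by omega) (by omega) le_rfl hxi
      omega
    refine ⟨p.concat (hP.2 n hn (by omega)), hp.concat hnew _, by rw [Walk.length_concat, hlen]; omega, ?_⟩
    simp only [Walk.support_concat, List.mem_append, List.mem_singleton]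
    rintro v (hv | rfl)
    · obtain ⟨i, hi, hin, rfl⟩ := hsupp v hv
      exact ⟨i, hi, by omega, rfl⟩
    · exact ⟨n + 1, by omega, le_rfl, rfl⟩

theorem hasCycleGE_of_adj (hP : IsIndexedPath G x m) (hm : 3 ≤ m) (h : G.Adj (x m) (x 1)) :
    HasCycleGE G m := by
  obtain ⟨p, hp, hlen, -⟩ := hP.exists_isPath (by omega)
  refine ⟨x m, Walk.cons h p, (Walk.cons_isCycle_iff p h).2 ⟨hp, fun he => ?_⟩, ?_⟩
  · have := hp.length_eq_one_of_mem_edges (Sym2.eq_swap ▸ he)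
    omega
  · simp only [Walk.length_cons, hlen]
    omega

theorem hasCycleGE_of_crossPair (hP : IsIndexedPath G x m) (hm : 3 ≤ m) {a : ℕ}
    (h : CrossPair G x m a (a + 1)) : HasCycleGE G m := by
  obtain ⟨ha, -, ham, hma, h1a⟩ := h
  -- `x ∘ f` is `x_{a+1} ⋯ x_m x_a ⋯ x_1`
  let f : ℕ → ℕ := fun i => if i ≤ m - a then a + i else m + 1 - i
  have hrot : IsIndexedPath G (x ∘ f) m := by
    refine hP.comp f (fun i _ _ => by simp only [f]; split_ifs <;> omega)
      (fun i j _ _ _ _ => by simp only [f]; split_ifs <;> omega) fun i hi hin => ?_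
    rcases lt_trichotomy i (m - a) with hi' | rfl | hi'
    · simp only [f, if_pos hi'.le, if_pos (show i + 1 ≤ m - a by omega)]
      exact hP.2 (a + i) (by omega) (by omega)
    · simp only [f, if_pos le_rfl, if_neg (show ¬m - a + 1 ≤ m - a by omega)]
      convert hma using 2 <;> omega
    · simp only [f, if_neg (show ¬i ≤ m - a by omega), if_neg (show ¬i + 1 ≤ m - a by omega)]
      convert (hP.2 (m - i) (by omega) (by omega)).symm using 2 <;> omega
  refine hrot.hasCycleGE_of_adj hm ?_
  simp only [Function.comp, f, if_neg (show ¬m ≤ m - a by omega),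
    if_pos (show 1 ≤ m - a by omega)]
  simpa [add_comm] using h1a

theorem adj_last_subset_pathNbrs (hP : IsIndexedPath G x m) (hm : 1 ≤ m) {D : Set V}
    (hx1 : x 1 ∈ D)
    (hmax : ∀ (y : ℕ → V) (m' : ℕ), IsIndexedPath G y m' → y 1 ∈ D → y m' ∈ D → m' ≤ m) :
    {u | u ∈ D ∧ G.Adj (x m) u} ⊆ pathNbrs G x m (x m) := by
  rintro u ⟨huD, hu⟩
  refine ⟨by_contra fun hnot => ?_, hu⟩
  have := hmax _ _ (hP.snoc hnot hu) (by rwa [Function.update_of_ne (by omega)]) (by simpa)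
  omega

theorem adj_first_subset_pathNbrs (hP : IsIndexedPath G x m) (hm : 1 ≤ m) {D : Set V}
    (hxm : x m ∈ D)
    (hmax : ∀ (y : ℕ → V) (m' : ℕ), IsIndexedPath G y m' → y 1 ∈ D → y m' ∈ D → m' ≤ m) :
    {u | u ∈ D ∧ G.Adj (x 1) u} ⊆ pathNbrs G x m (x 1) := by
  simpa [pathNbrs, pathVerts_reverse] using
    hP.reverse.adj_last_subset_pathNbrs hm (by simpa using hxm) hmax

theorem predNbrs_inter_eq_empty (hP : IsIndexedPath G x m)
    (hcross : ∀ a, ¬CrossPair G x m a (a + 1)) :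
    predNbrs G x m ∩ (pathNbrs G x m (x m) ∪ {x m}) = ∅ := by
  refine Set.eq_empty_of_forall_notMem ?_
  rintro _ ⟨⟨i, hi, him, h1i, rfl⟩, ⟨-, hmi⟩ | hxi⟩
  · refine hcross (i - 1) ⟨by omega, by omega, by omega, hmi, ?_⟩
    rwa [Nat.sub_add_cancel (by omega)]
  · have := hP.1 _ _ (by omega) (by omega) (by omega) le_rfl hxi
    omega

theorem succNbrs_inter_eq_empty (hP : IsIndexedPath G x m)
    (hcross : ∀ a, ¬CrossPair G x m a (a + 1)) :
    succNbrs G x m ∩ (pathNbrs G x m (x 1) ∪ {x 1}) = ∅ := by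
  refine Set.eq_empty_of_forall_notMem ?_
  rintro _ ⟨⟨i, hi, him, hmi, rfl⟩, ⟨-, h1i⟩ | hxi⟩
  · exact hcross i ⟨hi, by omega, by omega, hmi, h1i⟩
  · have := hP.1 _ _ (by omega) (by omega) le_rfl (by omega) hxi
    omega

end IsIndexedPath

theorem add_one_le_ncard_of_mem_disint {G : SimpleGraph V} {α : ℕ} {v : V}
    (hv : v ∈ disint G α) (hfin : {u | u ∈ disint G α ∧ G.Adj v u}.Finite) :
    α + 1 ≤ {u | u ∈ disint G α ∧ G.Adj v u}.ncard := by
  obtain ⟨S, hS, hvS⟩ := hv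
  exact (hS v hvS).trans <|
    Set.ncard_le_ncard (fun u hu => ⟨Set.subset_sUnion_of_mem hS hu.1, hu.2⟩) hfin

theorem NoCycleGE.not_hasCycleGE {G : SimpleGraph V} {k L : ℕ} (h : NoCycleGE G k)
    (hL : k ≤ L) : ¬HasCycleGE G L := fun ⟨v, w, hw, hlen⟩ => by
  have := h v w hw
  omega

theorem stmt_2_general (k ℓ : ℕ) (hk : 5 ≤ k)
    {V : Type*} (G : SimpleGraph V)
    (hcyc : NoCycleGE G k) (D : Set V) (hD : D = disint G (ℓ - 1))
    (x : ℕ → V) (m : ℕ) (hP : IsIndexedPath G x m) (hx1 : x 1 ∈ D) (hxm : x m ∈ D)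
    (hmax : ∀ (y : ℕ → V) (m' : ℕ), IsIndexedPath G y m' → y 1 ∈ D → y m' ∈ D → m' ≤ m)
    (hmk : k ≤ m) :
    ({u | u ∈ D ∧ G.Adj (x 1) u} ⊆ pathNbrs G x m (x 1)) ∧
    ({u | u ∈ D ∧ G.Adj (x m) u} ⊆ pathNbrs G x m (x m)) ∧
    (ℓ ≤ {u | u ∈ D ∧ G.Adj (x 1) u}.ncard ∧
      {u | u ∈ D ∧ G.Adj (x 1) u}.ncard ≤ (pathNbrs G x m (x 1)).ncard) ∧
    (ℓ ≤ {u | u ∈ D ∧ G.Adj (x m) u}.ncard ∧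
      {u | u ∈ D ∧ G.Adj (x m) u}.ncard ≤ (pathNbrs G x m (x m)).ncard) ∧
    (predNbrs G x m ∩ (pathNbrs G x m (x m) ∪ {x m}) = ∅) ∧
    (succNbrs G x m ∩ (pathNbrs G x m (x 1) ∪ {x 1}) = ∅) := by
  have hfirst := hP.adj_first_subset_pathNbrs (by omega) hxm hmax
  have hlast := hP.adj_last_subset_pathNbrs (by omega) hx1 hmax
  have hdeg : ∀ v ∈ D, {u | u ∈ D ∧ G.Adj v u} ⊆ pathNbrs G x m v →
      ℓ ≤ {u | u ∈ D ∧ G.Adj v u}.ncard := fun v hv hsub => by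
    subst hD
    have := add_one_le_ncard_of_mem_disint hv ((pathNbrs_finite G x m v).subset hsub)
    omega
  have hcross : ∀ a, ¬CrossPair G x m a (a + 1) := fun a h =>
    hcyc.not_hasCycleGE hmk (hP.hasCycleGE_of_crossPair (by omega) h)
  exact ⟨hfirst, hlast,
    ⟨hdeg _ hx1 hfirst, Set.ncard_le_ncard hfirst (pathNbrs_finite G x m _)⟩,
    ⟨hdeg _ hxm hlast, Set.ncard_le_ncard hlast (pathNbrs_finite G x m _)⟩,
    hP.predNbrs_inter_eq_empty hcross, hP.succNbrs_inter_eq_empty hcross⟩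

/-- Basic properties of a longest `H`-path (Claim 3.1). -/
theorem stmt_2 (k ℓ : ℕ) (hk : 5 ≤ k) (hℓ : ℓ = (k - 1) / 2)
    {V : Type*} [Fintype V] (G : SimpleGraph V) (h2c : TwoConnected G)
    (hcyc : NoCycleGE G k) (D : Set V) (hD : D = disint G (ℓ - 1)) (hne : D.Nonempty)
    (x : ℕ → V) (m : ℕ) (hP : IsIndexedPath G x m) (hx1 : x 1 ∈ D) (hxm : x m ∈ D)
    (hmax : ∀ (y : ℕ → V) (m' : ℕ), IsIndexedPath G y m' → y 1 ∈ D → y m' ∈ D → m' ≤ m)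
    (hmk : k ≤ m) :
    ({u | u ∈ D ∧ G.Adj (x 1) u} ⊆ pathNbrs G x m (x 1)) ∧
    ({u | u ∈ D ∧ G.Adj (x m) u} ⊆ pathNbrs G x m (x m)) ∧
    (ℓ ≤ {u | u ∈ D ∧ G.Adj (x 1) u}.ncard ∧
      {u | u ∈ D ∧ G.Adj (x 1) u}.ncard ≤ (pathNbrs G x m (x 1)).ncard) ∧
    (ℓ ≤ {u | u ∈ D ∧ G.Adj (x m) u}.ncard ∧
      {u | u ∈ D ∧ G.Adj (x m) u}.ncard ≤ (pathNbrs G x m (x m)).ncard) ∧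
    (predNbrs G x m ∩ (pathNbrs G x m (x m) ∪ {x m}) = ∅) ∧
    (succNbrs G x m ∩ (pathNbrs G x m (x 1) ∪ {x 1}) = ∅) :=
  stmt_2_general k ℓ hk G hcyc D hD x m hP hx1 hxm hmax hmk
end

section
/- Let k ≥ 5 be an integer and ℓ = ⌊(k-1)/2⌋. Let G be a simple graph containing no cycle of length at least k and let P = x₁x₂⋯x_m be a crossing path in G with m ≥ k, d_P(x₁) ≥ ℓ and d_P(x_m) ≥ ℓ. Set W = V(P) \ (⋃_{i=1}^{m-k+1} N_P^{+i}(x_m) ∪ {x₁}). Then: if k is even, x₁ is adjacent to all vertices of W except at most one, and moreover if d_P(x₁) = |W| then x₁ is adjacent to every vertex of W; and if k is odd, x₁ is adjacent to every vertex of W. -/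
open SimpleGraph

variable {V : Type*}

/-!
If `x_m ∼ x_t` and `x₁ ∼ x_a` with `t < a`, then `x₁ ⋯ x_t x_m x_{m-1} ⋯ x_a x₁` is a cycle of
length `t + m - a + 1 < k`, so every neighbour `x_a` of `x₁` lies more than `r = m - k + 1`
positions after every earlier neighbour `x_t` of `x_m`; in particular `N_P(x₁) ⊆ W`. The
positions `t + 1` for `x_t ∈ N_P(x_m)`, together with the `r - 1` positions following `t + 1`
for the last neighbour `x_t` of `x_m` before the crossing neighbour of `x₁`, all lie outside `W`,
so `|W| + d_P(x_m) ≤ k - 1`. Hence `|W \ N_P(x₁)| ≤ k - 1 - 2ℓ`, which is `0` for odd `k` and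
at most `1` for even `k`.
-/

section

open Finset

variable {G : SimpleGraph V} {x : ℕ → V} {m : ℕ}

def offSuccVerts (G : SimpleGraph V) (x : ℕ → V) (m r : ℕ) : Set V :=
  pathVerts x m \ ((⋃ i ∈ Finset.Icc 1 r, iterNbrSucc G x m i) ∪ {x 1})

theorem SimpleGraph.exists_isCycle_of_injOn_of_adj {y : ℕ → V} {L : ℕ} (hL : 3 ≤ L)
    (hinj : Set.InjOn y (Set.Iio L))
    (hadj : ∀ d, d + 1 < L → G.Adj (y d) (y (d + 1)))
    (hclose : G.Adj (y (L - 1)) (y 0)) :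
    ∃ (v : V) (c : G.Walk v v), c.IsCycle ∧ c.length = L := by
  set l := (List.range L).map y
  have hne : l ≠ [] := by simp only [ne_eq, List.map_eq_nil_iff, List.range_eq_nil, l]; omega
  have hchain : l.IsChain G.Adj :=
    (List.isChain_map y).2 ((List.isChain_range _ _).2 fun d hd => hadj d (by omega))
  have hclose' : G.Adj (l.getLast hne) (l.head hne) := by
    simpa [l, List.getLast_map, List.head_map] using hclose
  have hnodup : l.Nodup :=
    List.nodup_range.map_on fun _ hi _ hj => hinj (by simpa using hi) (by simpa using hj)
  refine ⟨_, .cons hclose' (.ofSupport l hne hchain), ?_, ?_⟩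
  · rw [Walk.isCycle_iff_isPath_tail_and_le_length]
    simp only [Walk.getVert_cons_succ, Walk.tail_cons, Walk.isPath_def, Walk.support_copy,
      Walk.support_ofSupport, hnodup, Walk.length_cons, Walk.length_ofSupport, List.length_map,
      List.length_range, true_and, l]
    omega
  · simp only [Walk.length_cons, Walk.length_ofSupport, List.length_map, List.length_range, l]
    omega

theorem IsIndexedPath.add_lt_add_of_adj_of_adj {k : ℕ} (hP : IsIndexedPath G x m)
    (hcyc : NoCycleGE G k) (hk : 3 ≤ k) {t a : ℕ} (ht : 1 ≤ t) (hta : t < a) (ham : a ≤ m)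
    (hmt : G.Adj (x m) (x t)) (h1a : G.Adj (x 1) (x a)) : t + m + 1 < a + k := by
  by_cases htrivial : t = 1 ∧ a = m
  · omega
  have hedge : ∀ i j, 1 ≤ i → i ≤ m → 1 ≤ j → j ≤ m →
      i + 1 = j ∨ j + 1 = i ∨ (i = t ∧ j = m) ∨ (i = a ∧ j = 1) → G.Adj (x i) (x j) := by
    rintro i j hi him hj hjm (rfl | rfl | ⟨rfl, rfl⟩ | ⟨rfl, rfl⟩)
    · exact hP.2 i hi (by omega)
    · exact (hP.2 j hj (by omega)).symm
    · exact hmt.symm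
    · exact h1a.symm
  -- the cycle `x₁ ⋯ x_t x_m x_{m-1} ⋯ x_a x₁`
  set σ : ℕ → ℕ := fun d => if d < t then d + 1 else m + t - d
  obtain ⟨v, c, hc, hlen⟩ := exists_isCycle_of_injOn_of_adj (G := G) (y := x ∘ σ)
    (L := t + m + 1 - a) (by omega)
    (fun i hi j hj hij => by
      rw [Set.mem_Iio] at hi hj
      have := hP.1 (σ i) (σ j) (by grind) (by grind) (by grind) (by grind) hij
      grind)
    (fun d hd => hedge _ _ (by grind) (by grind) (by grind) (by grind) (by grind))
    (hedge _ _ (by grind) (by grind) (by grind) (by grind) (by grind))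
  have := hcyc v c hc
  omega

theorem IsIndexedPath.iterNbrSucc_eq (hP : IsIndexedPath G x m) (i : ℕ) :
    iterNbrSucc G x m i =
      {v | ∃ t, 1 ≤ t ∧ t + i ≤ m ∧ G.Adj (x m) (x t) ∧ v = x (t + i)} := by
  induction i with
  | zero =>
    ext v
    simp only [iterNbrSucc, Function.iterate_zero, id, pathNbrs, pathVerts, Set.mem_ofPred_eq]
    constructor
    · rintro ⟨⟨t, ht, htm, rfl⟩, hadj⟩
      exact ⟨t, ht, htm, hadj, rfl⟩
    · rintro ⟨t, ht, htm, hadj, rfl⟩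
      exact ⟨⟨t, ht, htm, rfl⟩, hadj⟩
  | succ i ih =>
    rw [iterNbrSucc, Function.iterate_succ_apply', ← iterNbrSucc, ih]
    ext v
    simp only [succStep, Set.mem_ofPred_eq]
    constructor
    · rintro ⟨q, hq, hqm, ⟨t, ht, htm, hadj, hxq⟩, rfl⟩
      obtain rfl : q = t + i := hP.1 q (t + i) hq (by omega) (by omega) htm hxq
      exact ⟨t, ht, by omega, hadj, by rw [Nat.add_assoc]⟩
    · rintro ⟨t, ht, htm, hadj, rfl⟩
      exact ⟨t + i, by omega, by omega, ⟨t, ht, by omega, hadj, rfl⟩, rfl⟩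

theorem IsIndexedPath.mem_iUnion_iterNbrSucc_iff (hP : IsIndexedPath G x m) {r s : ℕ}
    (hs : 1 ≤ s) (hsm : s ≤ m) :
    x s ∈ ⋃ i ∈ Finset.Icc 1 r, iterNbrSucc G x m i ↔
      ∃ t, 1 ≤ t ∧ t < s ∧ s ≤ t + r ∧ G.Adj (x m) (x t) := by
  simp only [Set.mem_iUnion, Finset.mem_Icc, hP.iterNbrSucc_eq, Set.mem_ofPred_eq, exists_prop]
  constructor
  · rintro ⟨i, ⟨hi, hir⟩, t, ht, him, hadj, hxs⟩
    obtain rfl := hP.1 s (t + i) hs hsm (by omega) him hxs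
    exact ⟨t, ht, by omega, by omega, hadj⟩
  · rintro ⟨t, ht, hts, hst, hadj⟩
    exact ⟨s - t, ⟨by omega, by omega⟩, t, ht, by omega, hadj,
      by rw [Nat.add_sub_cancel' hts.le]⟩

theorem Finset.card_add_le_card_filter_window {T : Finset ℕ} {m r j : ℕ} (hr : 1 ≤ r)
    (hT : ∀ t ∈ T, 1 ≤ t ∧ t < m) (hjm : j ≤ m) (hne : ∃ t ∈ T, t < j)
    (hgap : ∀ t ∈ T, t < j → t + r < j) :
    #T + (r - 1) ≤ #{s ∈ Icc 2 m | ∃ t ∈ T, t < s ∧ s ≤ t + r} := by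
  -- the last window below `j` contributes `r - 1` indices not of the form `t + 1`
  obtain ⟨t₀, ht₀, ht₀max⟩ := (T.filter (· < j)).exists_max_image id
    (by simpa [Finset.filter_nonempty_iff] using hne)
  simp only [Finset.mem_filter, id] at ht₀ ht₀max
  obtain ⟨ht₀T, ht₀j⟩ := ht₀
  have hsub : T.image (· + 1) ∪ Icc (t₀ + 2) (t₀ + r) ⊆
      {s ∈ Icc 2 m | ∃ t ∈ T, t < s ∧ s ≤ t + r} := by
    intro s hs
    simp only [Finset.mem_union, Finset.mem_image, Finset.mem_Icc, Finset.mem_filter] at hs ⊢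
    rcases hs with ⟨t, ht, rfl⟩ | hs
    · have := hT t ht
      exact ⟨by omega, t, ht, by omega, by omega⟩
    · have := hgap t₀ ht₀T ht₀j
      exact ⟨by omega, t₀, ht₀T, by omega, by omega⟩
  have hdisj : Disjoint (T.image (· + 1)) (Icc (t₀ + 2) (t₀ + r)) := by
    rw [Finset.disjoint_left]
    rintro _ hs hs'
    obtain ⟨t, ht, rfl⟩ := Finset.mem_image.mp hs
    simp only [Finset.mem_Icc] at hs'
    have := hgap t₀ ht₀T ht₀j
    have := ht₀max t ⟨ht, by omega⟩
    omega
  calc #T + (r - 1) = #(T.image (· + 1) ∪ Icc (t₀ + 2) (t₀ + r)) := by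
        rw [Finset.card_union_of_disjoint hdisj, Finset.card_image_of_injective _
          (add_left_injective 1), Nat.card_Icc]
        omega
    _ ≤ _ := Finset.card_le_card hsub

theorem offSuccVerts_finite (G : SimpleGraph V) (x : ℕ → V) (m r : ℕ) :
    (offSuccVerts G x m r).Finite :=
  ((Set.finite_Icc 1 m).image x).subset fun _ ⟨⟨s, hs, hsm, hxs⟩, _⟩ => ⟨s, ⟨hs, hsm⟩, hxs⟩

theorem IsIndexedPath.ncard_image (hP : IsIndexedPath G x m) {S : Finset ℕ}
    (hS : ∀ i ∈ S, 1 ≤ i ∧ i ≤ m) : (x '' S).ncard = #S := by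
  rw [Set.InjOn.ncard_image, Set.ncard_coe_finset]
  intro i hi j hj
  exact hP.1 i j (hS i hi).1 (hS i hi).2 (hS j hj).1 (hS j hj).2

theorem IsIndexedPath.ncard_offSuccVerts_add_ncard_pathNbrs_add_le (hP : IsIndexedPath G x m)
    {r j : ℕ} (hr : 1 ≤ r) (hjm : j ≤ m) (hne : ∃ t, 1 ≤ t ∧ t < j ∧ G.Adj (x m) (x t))
    (hgap : ∀ t, 1 ≤ t → t < j → G.Adj (x m) (x t) → t + r < j) :
    (offSuccVerts G x m r).ncard + (pathNbrs G x m (x m)).ncard + r ≤ m := by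
  classical
  set T := {t ∈ Icc 1 m | G.Adj (x m) (x t)}
  set U := {s ∈ Icc 2 m | ∃ t ∈ T, t < s ∧ s ≤ t + r}
  have hTm : ∀ t ∈ T, 1 ≤ t ∧ t < m := by
    intro t ht
    simp only [T, Finset.mem_filter, Finset.mem_Icc] at ht
    refine ⟨ht.1.1, lt_of_le_of_ne ht.1.2 ?_⟩
    rintro rfl
    exact G.irrefl ht.2
  have hT : pathNbrs G x m (x m) = x '' T := by
    ext v
    simp only [pathNbrs, pathVerts, T, Set.mem_ofPred_eq, Finset.coe_filter, Set.mem_image,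
      Finset.mem_Icc]
    constructor
    · rintro ⟨⟨t, ht, htm, rfl⟩, hadj⟩
      exact ⟨t, ⟨⟨ht, htm⟩, hadj⟩, rfl⟩
    · rintro ⟨t, ⟨⟨ht, htm⟩, hadj⟩, rfl⟩
      exact ⟨⟨t, ht, htm, rfl⟩, hadj⟩
  have hmem : ∀ s, 1 ≤ s → s ≤ m →
      (x s ∈ offSuccVerts G x m r ↔ s ∈ Icc 2 m \ U) := by
    intro s hs hsm
    have hs1 : x s = x 1 ↔ s = 1 := ⟨hP.1 s 1 hs hsm le_rfl (by omega), fun h => h ▸ rfl⟩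
    rw [offSuccVerts, Set.mem_sdiff, Set.mem_union, hP.mem_iUnion_iterNbrSucc_iff hs hsm,
      Set.mem_singleton_iff, hs1]
    simp only [U, T, Finset.mem_sdiff, Finset.mem_filter, Finset.mem_Icc]
    constructor
    · rintro ⟨-, hfar⟩
      refine ⟨by omega, ?_⟩
      rintro ⟨-, t, ⟨⟨ht, -⟩, hadj⟩, hts, hst⟩
      exact hfar (Or.inl ⟨t, ht, hts, hst, hadj⟩)
    · rintro ⟨hs', hfar⟩
      refine ⟨⟨s, hs, hsm, rfl⟩, ?_⟩
      rintro (⟨t, ht, hts, hst, hadj⟩ | rfl)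
      · exact hfar ⟨hs', t, ⟨⟨ht, by omega⟩, hadj⟩, hts, hst⟩
      · omega
  have hW : offSuccVerts G x m r = x '' ↑(Icc 2 m \ U) := by
    ext v
    constructor
    · intro hv
      obtain ⟨s, hs, hsm, rfl⟩ := hv.1
      exact ⟨s, (hmem s hs hsm).1 hv, rfl⟩
    · rintro ⟨s, hs, rfl⟩
      have := Finset.mem_Icc.mp (Finset.mem_sdiff.mp hs).1
      exact (hmem s (by omega) this.2).2 hs
  have hU : #T + (r - 1) ≤ #U := by
    refine Finset.card_add_le_card_filter_window hr hTm hjm ?_ fun t ht htj => ?_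
    · obtain ⟨t, ht, htj, hadj⟩ := hne
      exact ⟨t, Finset.mem_filter.mpr ⟨Finset.mem_Icc.mpr ⟨ht, by omega⟩, hadj⟩, htj⟩
    · exact hgap t (hTm t ht).1 htj (Finset.mem_filter.mp ht).2
  have hUW : #(Icc 2 m \ U) + #U = m - 1 := by
    rw [Finset.card_sdiff_add_card_eq_card (Finset.filter_subset _ _), Nat.card_Icc]
    omega
  rw [hW, hT, hP.ncard_image (fun s hs => ?_),
    hP.ncard_image fun t ht => ⟨(hTm t ht).1, (hTm t ht).2.le⟩]
  · omega
  · simp only [Finset.mem_sdiff, Finset.mem_Icc] at hs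
    omega

theorem IsIndexedPath.pathNbrs_first_subset_offSuccVerts (hP : IsIndexedPath G x m) {r : ℕ}
    (hgap : ∀ t a, 1 ≤ t → t < a → a ≤ m → G.Adj (x m) (x t) → G.Adj (x 1) (x a) →
      t + r < a) :
    pathNbrs G x m (x 1) ⊆ offSuccVerts G x m r := by
  rintro _ ⟨⟨a, ha, ham, rfl⟩, hadj⟩
  rw [offSuccVerts]
  refine ⟨⟨a, ha, ham, rfl⟩, ?_⟩
  rintro (hnear | hfirst)
  · obtain ⟨t, ht, hta, hat, hmt⟩ := (hP.mem_iUnion_iterNbrSucc_iff ha ham).mp hnear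
    have := hgap t a ht hta ham hmt hadj
    omega
  · rw [Set.mem_singleton_iff] at hfirst
    exact G.irrefl (hfirst ▸ hadj)

end

theorem stmt_5_general (k ℓ : ℕ) (hk : 5 ≤ k) (hℓ : ℓ = (k - 1) / 2)
    {V : Type*} (G : SimpleGraph V) (hcyc : NoCycleGE G k)
    (x : ℕ → V) (m : ℕ) (hP : IsIndexedPath G x m) (hmk : k ≤ m)
    (hcross : ∃ i j, CrossPair G x m i j)
    (hd1 : ℓ ≤ (pathNbrs G x m (x 1)).ncard)
    (hdm : ℓ ≤ (pathNbrs G x m (x m)).ncard)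
    (W : Set V)
    (hW : W = pathVerts x m \
      ((⋃ i ∈ Finset.Icc 1 (m - k + 1), iterNbrSucc G x m i) ∪ {x 1})) :
    (Even k → {v ∈ W | ¬G.Adj (x 1) v}.ncard ≤ 1 ∧
      ((pathNbrs G x m (x 1)).ncard = W.ncard → ∀ v ∈ W, G.Adj (x 1) v)) ∧
    (Odd k → ∀ v ∈ W, G.Adj (x 1) v) := by
  replace hW : W = offSuccVerts G x m (m - k + 1) := hW
  have hgap : ∀ t a, 1 ≤ t → t < a → a ≤ m → G.Adj (x m) (x t) → G.Adj (x 1) (x a) →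
      t + (m - k + 1) < a := fun t a ht hta ham hmt h1a => by
    have := hP.add_lt_add_of_adj_of_adj hcyc (by omega) ht hta ham hmt h1a
    omega
  obtain ⟨i, j, hi, hij, hjm, hmi, h1j⟩ := hcross
  have hcount : W.ncard + (pathNbrs G x m (x m)).ncard + (m - k + 1) ≤ m :=
    hW ▸ hP.ncard_offSuccVerts_add_ncard_pathNbrs_add_le (by omega) hjm ⟨i, hi, hij, hmi⟩
      fun t ht htj hmt => hgap t j ht htj hjm hmt h1j
  have hsub : pathNbrs G x m (x 1) ⊆ W := hW ▸ hP.pathNbrs_first_subset_offSuccVerts hgap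
  have hWfin : W.Finite := hW ▸ offSuccVerts_finite G x m _
  have hle := Set.ncard_le_ncard hsub hWfin
  have hnonadj : {v ∈ W | ¬G.Adj (x 1) v}.ncard ≤ W.ncard - (pathNbrs G x m (x 1)).ncard := by
    rw [← Set.ncard_sdiff hsub (hWfin.subset hsub)]
    exact Set.ncard_le_ncard (fun v ⟨hv, hadj⟩ => ⟨hv, fun h => hadj h.2⟩) hWfin.sdiff
  have hall : (pathNbrs G x m (x 1)).ncard = W.ncard → ∀ v ∈ W, G.Adj (x 1) v :=
    fun h v hv => (Set.eq_of_subset_of_ncard_le hsub h.ge hWfin ▸ hv).2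
  rw [Nat.even_iff, Nat.odd_iff]
  exact ⟨fun hk => ⟨by omega, hall⟩, fun hk => hall (by omega)⟩

/-- Neighbourhood structure of `x₁` on a crossing path (Claim 3.3). -/
theorem stmt_5 (k ℓ : ℕ) (hk : 5 ≤ k) (hℓ : ℓ = (k - 1) / 2)
    {V : Type*} [Fintype V] (G : SimpleGraph V) (hcyc : NoCycleGE G k)
    (x : ℕ → V) (m : ℕ) (hP : IsIndexedPath G x m) (hmk : k ≤ m)
    (hcross : ∃ i j, CrossPair G x m i j)
    (hd1 : ℓ ≤ (pathNbrs G x m (x 1)).ncard)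
    (hdm : ℓ ≤ (pathNbrs G x m (x m)).ncard)
    (W : Set V)
    (hW : W = pathVerts x m \
      ((⋃ i ∈ Finset.Icc 1 (m - k + 1), iterNbrSucc G x m i) ∪ {x 1})) :
    (Even k → {v ∈ W | ¬G.Adj (x 1) v}.ncard ≤ 1 ∧
      ((pathNbrs G x m (x 1)).ncard = W.ncard → ∀ v ∈ W, G.Adj (x 1) v)) ∧
    (Odd k → ∀ v ∈ W, G.Adj (x 1) v) :=
  stmt_5_general k ℓ hk hℓ G hcyc x m hP hmk hcross hd1 hdm W hW
end

section
/- Let G be a connected simple graph on n ≥ 6 vertices, let c₁c₂ be a non-edge of G, and suppose every vertex of G other than c₁ and c₂ has degree exactly n-2. Then for every edge ab of G there is a Hamilton path of G whose endpoints are c₁ and c₂ and which contains the edge ab. -/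
open SimpleGraph

variable {V : Type*}

/-!
Every vertex other than `c₁, c₂` has exactly one non-neighbour. Such a vertex `v` can be inserted
into a path with at least five vertices between two consecutive vertices `p, q` as long as neither
is the non-neighbour of `v` and `(p, q)` is not the edge `ab`: of the first four gaps, the
non-neighbour blocks at most two and `ab` at most one. So it suffices to find a path `c₁ … c₂`
on five vertices through `ab`, and then to insert the remaining vertices one at a time. Such a
short path comes from a case analysis on how `a, b` meet `c₁, c₂`.
-/

namespace List

variable {α : Type*}

theorem IsInfix.insert_after {a b p v : α} {l₁ l₂ : List α} (h : [a, b] <:+: l₁ ++ p :: l₂)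
    (hp : p ≠ a) : [a, b] <:+: l₁ ++ p :: v :: l₂ := by
  induction l₁ with
  | nil =>
    rcases infix_cons_iff.1 h with h | h
    · exact absurd (cons_prefix_cons.1 h).1.symm hp
    · exact (h.trans (infix_cons (infix_refl _))).trans (infix_cons (infix_refl _))
  | cons x l₁ ih =>
    rw [cons_append, infix_cons_iff] at h ⊢
    refine h.imp (fun h => ?_) ih
    obtain ⟨rfl, h⟩ := cons_prefix_cons.1 h
    cases l₁ <;> simp_all

theorem IsChain.insert_between {R : α → α → Prop} {l₁ l₂ : List α} {p q v : α}
    (h : (l₁ ++ p :: q :: l₂).IsChain R) (hpv : R p v) (hvq : R v q) :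
    (l₁ ++ p :: v :: q :: l₂).IsChain R := by
  rw [isChain_append] at h ⊢
  obtain ⟨h₁, h₂, hlink⟩ := h
  exact ⟨h₁, isChain_cons_cons.2 ⟨hpv, isChain_cons_cons.2 ⟨hvq, (isChain_cons_cons.1 h₂).2⟩⟩,
    hlink⟩

theorem exists_eq_append_cons_cons_of_nodup {z a : α} :
    ∀ {l : List α}, l.Nodup → 5 ≤ l.length →
      ∃ l₁ p q l₂, l = l₁ ++ p :: q :: l₂ ∧ p ≠ z ∧ p ≠ a ∧ q ≠ z
  | x₁ :: x₂ :: x₃ :: x₄ :: x₅ :: t, hnd, _ => by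
    by_contra H
    simp only [not_exists, not_and_or, not_ne_iff] at H
    have h₁ := (H [] x₁ x₂ _).resolve_left (not_not.2 rfl)
    have h₂ := (H [x₁] x₂ x₃ _).resolve_left (not_not.2 rfl)
    have h₃ := (H [x₁, x₂] x₃ x₄ _).resolve_left (not_not.2 rfl)
    have h₄ := (H [x₁, x₂, x₃] x₄ x₅ t).resolve_left (not_not.2 rfl)
    simp only [nodup_cons, mem_cons, not_or] at hnd
    grind

theorem exists_notMem_of_length_lt [Fintype α] {l : List α} (h : l.length < Fintype.card α) :
    ∃ x, x ∉ l := by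
  classical
  by_contra! H
  have : Finset.univ ⊆ l.toFinset := fun x _ => mem_toFinset.2 (H x)
  have := (Finset.card_le_card this).trans (toFinset_card_le l)
  rw [Finset.card_univ] at this
  omega

theorem exists_getD_eq_of_infix {p q : α} {l : List α} (d : α) (h : [p, q] <:+: l) :
    ∃ i, 1 ≤ i ∧ i < l.length ∧ l.getD (i - 1) d = p ∧ l.getD (i + 1 - 1) d = q := by
  obtain ⟨s, t, rfl⟩ := h
  refine ⟨s.length + 1, by omega, by simp, ?_, ?_⟩ <;> simp [getD_eq_getElem?_getD]

end List

section HamiltonPath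

variable {G : SimpleGraph V} {c₁ c₂ a b v z : V} {l : List V}

def AdjExcept (G : SimpleGraph V) (v z : V) : Prop :=
  ∀ w, w ≠ v → w ≠ z → G.Adj v w

theorem AdjExcept.of_compl_adj {z' : V} (h : AdjExcept G v z') (hz : Gᶜ.Adj v z) :
    AdjExcept G v z := by
  intro w hwv hwz
  by_contra hw
  obtain rfl : w = z' := by_contra fun h' => hw (h w hwv h')
  obtain rfl : z = w := by_contra fun h' => hz.2 (h z hz.1.symm h')
  exact hwz rfl

theorem AdjExcept.adj_or_adj {x y : V} (h : AdjExcept G v z) (hxy : x ≠ y) (hx : x ≠ v)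
    (hy : y ≠ v) : G.Adj v x ∨ G.Adj v y := by
  by_cases hxz : x = z
  · exact Or.inr (h y hy (hxz ▸ hxy.symm))
  · exact Or.inl (h x hx hxz)

theorem adjExcept_of_existsUnique (h : ∃! z, Gᶜ.Adj v z) : ∃ z, AdjExcept G v z := by
  obtain ⟨z, -, huniq⟩ := h
  exact ⟨z, fun w hwv hwz => by_contra fun hw => hwz (huniq w ⟨hwv.symm, hw⟩)⟩

theorem existsUnique_compl_adj_of_ncard_neighborSet [Fintype V] (hcard : 2 ≤ Fintype.card V)
    (h : (G.neighborSet v).ncard = Fintype.card V - 2) : ∃! z, Gᶜ.Adj v z := by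
  classical
  rw [← degree_eq_one_iff_existsUnique_adj, degree_compl, ← card_neighborSet_eq_degree,
    ← Nat.card_eq_fintype_card (α := G.neighborSet v), Nat.card_coe_set_eq, h]
  omega

structure IsPathThroughEdge (G : SimpleGraph V) (c₁ c₂ a b : V) (l : List V) : Prop where
  isChain : l.IsChain G.Adj
  nodup : l.Nodup
  head? : l.head? = some c₁
  getLast? : l.getLast? = some c₂
  edge : [a, b] <:+: l ∨ [b, a] <:+: l

namespace IsPathThroughEdge

theorem swap (h : IsPathThroughEdge G c₁ c₂ a b l) : IsPathThroughEdge G c₁ c₂ b a l :=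
  ⟨h.isChain, h.nodup, h.head?, h.getLast?, h.edge.symm⟩

theorem reverse (h : IsPathThroughEdge G c₁ c₂ a b l) :
    IsPathThroughEdge G c₂ c₁ a b l.reverse where
  isChain := List.isChain_reverse.2 (h.isChain.imp fun _ _ h => h.symm)
  nodup := List.nodup_reverse.2 h.nodup
  head? := by rw [List.head?_reverse, h.getLast?]
  getLast? := by rw [List.getLast?_reverse, h.head?]
  edge := h.edge.symm.imp (List.reverse_infix (l₁ := [b, a])).2
    (List.reverse_infix (l₁ := [a, b])).2

theorem exists_insert (h : IsPathThroughEdge G c₁ c₂ a b l) (hlen : 5 ≤ l.length) (hv : v ∉ l)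
    (hvz : AdjExcept G v z) : ∃ l', IsPathThroughEdge G c₁ c₂ a b l' ∧ l'.Perm (v :: l) := by
  wlog hab : [a, b] <:+: l generalizing a b
  · obtain ⟨l', h', hperm⟩ := this h.swap (h.edge.resolve_left hab)
    exact ⟨l', h'.swap, hperm⟩
  obtain ⟨l₁, p, q, l₂, rfl, hpz, hpa, hqz⟩ :=
    List.exists_eq_append_cons_cons_of_nodup (z := z) (a := a) h.nodup hlen
  have hvw : ∀ w ∈ l₁ ++ p :: q :: l₂, w ≠ z → G.Adj v w := fun w hw hwz =>
    hvz w (fun hwv => hv (hwv ▸ hw)) hwz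
  have hperm : (l₁ ++ p :: v :: q :: l₂).Perm (v :: (l₁ ++ p :: q :: l₂)) := by
    simpa using List.perm_middle (a := v) (l₁ := l₁ ++ [p]) (l₂ := q :: l₂)
  refine ⟨_, ⟨?_, ?_, ?_, ?_, Or.inl (hab.insert_after hpa)⟩, hperm⟩
  · exact h.isChain.insert_between (hvw p (by simp) hpz).symm (hvw q (by simp) hqz)
  · exact hperm.nodup_iff.2 (List.nodup_cons.2 ⟨hv, h.nodup⟩)
  · rw [← h.head?]; cases l₁ <;> rfl
  · rw [← h.getLast?]; simp [List.getLast?_append]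

theorem exists_forall_mem [Fintype V] (h : IsPathThroughEdge G c₁ c₂ a b l) (hlen : 5 ≤ l.length)
    (hI : ∀ v, v ≠ c₁ → v ≠ c₂ → ∃ z, AdjExcept G v z) :
    ∃ l', IsPathThroughEdge G c₁ c₂ a b l' ∧ ∀ x, x ∈ l' := by
  classical
  suffices ∀ R : Finset V, ∀ l, IsPathThroughEdge G c₁ c₂ a b l → 5 ≤ l.length →
      (∀ x, x ∉ l → x ∈ R) → ∃ l', IsPathThroughEdge G c₁ c₂ a b l' ∧ ∀ x, x ∈ l' from
    this Finset.univ l h hlen fun x _ => Finset.mem_univ x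
  intro R
  induction R using Finset.induction_on with
  | empty => exact fun l h _ hR => ⟨l, h, fun x => by_contra fun hx => by simpa using hR x hx⟩
  | insert v R _ ih =>
    intro l h hlen hR
    by_cases hv : v ∈ l
    · refine ih l h hlen fun x hx => ?_
      exact (Finset.mem_insert.1 (hR x hx)).resolve_left fun hxv => hx (hxv ▸ hv)
    obtain ⟨z, hz⟩ := hI v (fun hv₁ => hv (hv₁ ▸ List.mem_of_mem_head? h.head?))
      (fun hv₂ => hv (hv₂ ▸ List.mem_of_mem_getLast? h.getLast?))
    obtain ⟨l', h', hperm⟩ := h.exists_insert hlen hv hz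
    refine ih l' h' (by rw [hperm.length_eq, List.length_cons]; omega) fun x hx => ?_
    rw [hperm.mem_iff, List.mem_cons, not_or] at hx
    exact (Finset.mem_insert.1 (hR x hx.2)).resolve_left hx.1

theorem exists_isIndexedPath (h : IsPathThroughEdge G c₁ c₂ a b l) :
    ∃ x : ℕ → V, IsIndexedPath G x l.length ∧ x 1 = c₁ ∧ x l.length = c₂ ∧
      ∃ i, 1 ≤ i ∧ i < l.length ∧ ((x i = a ∧ x (i + 1) = b) ∨ (x i = b ∧ x (i + 1) = a)) := by
  refine ⟨fun i => l.getD (i - 1) c₁, ⟨fun i j hi hil hj hjl hij => ?_, fun i hi hil => ?_⟩,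
    ?_, ?_, ?_⟩
  · simp only [List.getD_eq_getElem _ _ (show i - 1 < l.length by omega),
      List.getD_eq_getElem _ _ (show j - 1 < l.length by omega)] at hij
    have := h.nodup.getElem_inj_iff.1 hij
    omega
  · have := List.isChain_iff_getElem.1 h.isChain (i - 1) (by omega)
    simp only
    rwa [show i + 1 - 1 = i - 1 + 1 by omega, List.getD_eq_getElem _ _ (by omega),
      List.getD_eq_getElem _ _ (by omega)]
  · simp [List.getD_eq_getElem?_getD, ← List.head?_eq_getElem?, h.head?]
  · simp [List.getD_eq_getElem?_getD, ← List.getLast?_eq_getElem?, h.getLast?]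
  · rcases h.edge with hab | hba
    · obtain ⟨i, hi, hil, hp, hq⟩ := List.exists_getD_eq_of_infix c₁ hab
      exact ⟨i, hi, hil, Or.inl ⟨hp, hq⟩⟩
    · obtain ⟨i, hi, hil, hp, hq⟩ := List.exists_getD_eq_of_infix c₁ hba
      exact ⟨i, hi, hil, Or.inr ⟨hp, hq⟩⟩

end IsPathThroughEdge

theorem exists_isPathThroughEdge_of_adj_left [Fintype V] (hcard : 6 ≤ Fintype.card V)
    (hc : c₁ ≠ c₂) (hne : ¬G.Adj c₁ c₂) (hI : ∀ v, v ≠ c₁ → v ≠ c₂ → ∃ z, AdjExcept G v z)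
    (hc₂ : ∃ y, G.Adj c₂ y) (hb : G.Adj c₁ b) (hb₂ : b ≠ c₂) (hbz : Gᶜ.Adj b z) :
    ∃ l, IsPathThroughEdge G c₁ c₂ c₁ b l ∧ 5 ≤ l.length := by
  obtain ⟨z', hz'⟩ := hI b hb.ne' hb₂
  have hbz' := hz'.of_compl_adj hbz
  by_cases hz₂ : z = c₂
  · subst z
    obtain ⟨y, hy⟩ := hc₂
    have hy₁ : y ≠ c₁ := by rintro rfl; exact hne hy.symm
    have hyb : y ≠ b := by rintro rfl; exact hbz.2 hy.symm
    obtain ⟨zy, hzy⟩ := hI y hy₁ hy.ne'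
    obtain ⟨u, hu⟩ :=
      List.exists_notMem_of_length_lt (l := [c₁, c₂, b, y, zy]) (lt_of_lt_of_le (by simp) hcard)
    simp only [List.mem_cons, List.not_mem_nil, or_false, not_or] at hu
    obtain ⟨hu₁, hu₂, hub, huy, huzy⟩ := hu
    refine ⟨[c₁, b, u, y, c₂], ⟨?_, ?_, rfl, rfl, Or.inl ⟨[], [u, y, c₂], rfl⟩⟩, le_rfl⟩
    · simp only [List.isChain_cons_cons, List.isChain_singleton, and_true]
      exact ⟨hb, hbz' u hub hu₂, (hzy u huy huzy).symm, hy.symm⟩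
    · grind [List.nodup_cons, hb.ne, hy.ne]
  · -- `z` is an inner vertex, so `b` is its only non-neighbour and `z` is adjacent to `c₂`.
    have hz₁ : z ≠ c₁ := by rintro rfl; exact hbz.2 hb.symm
    obtain ⟨z'', hz''⟩ := hI z hz₁ hz₂
    have hzb := hz''.of_compl_adj hbz.symm
    obtain ⟨u, hu⟩ :=
      List.exists_notMem_of_length_lt (l := [c₁, c₂, b, z]) (lt_of_lt_of_le (by simp) hcard)
    simp only [List.mem_cons, List.not_mem_nil, or_false, not_or] at hu
    obtain ⟨hu₁, hu₂, hub, huz⟩ := hu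
    refine ⟨[c₁, b, u, z, c₂], ⟨?_, ?_, rfl, rfl, Or.inl ⟨[], [u, z, c₂], rfl⟩⟩, le_rfl⟩
    · simp only [List.isChain_cons_cons, List.isChain_singleton, and_true]
      exact ⟨hb, hbz' u hub huz, (hzb u huz hub).symm, hzb c₂ (Ne.symm hz₂) hb₂.symm⟩
    · grind [List.nodup_cons, hb.ne, hbz.1]

theorem exists_isPathThroughEdge_of_adj_adj [Fintype V] (hcard : 5 ≤ Fintype.card V)
    (hc : c₁ ≠ c₂) (hI : ∀ v, v ≠ c₁ → v ≠ c₂ → ∃ z, AdjExcept G v z) (hab : G.Adj a b)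
    (ha₂ : a ≠ c₂) (hb₁ : b ≠ c₁) (ha : G.Adj c₁ a) (hb : G.Adj b c₂) :
    ∃ l, IsPathThroughEdge G c₁ c₂ a b l ∧ 5 ≤ l.length := by
  obtain ⟨u, hu⟩ :=
    List.exists_notMem_of_length_lt (l := [c₁, c₂, a, b]) (lt_of_lt_of_le (by simp) hcard)
  simp only [List.mem_cons, List.not_mem_nil, or_false, not_or] at hu
  obtain ⟨hu₁, hu₂, hua, hub⟩ := hu
  obtain ⟨z, hz⟩ := hI u hu₁ hu₂
  by_cases hzu : z = b ∨ z = c₂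
  · refine ⟨[c₁, u, a, b, c₂], ⟨?_, ?_, rfl, rfl, Or.inl ⟨[c₁, u], [c₂], rfl⟩⟩, le_rfl⟩
    · simp only [List.isChain_cons_cons, List.isChain_singleton, and_true]
      refine ⟨(hz c₁ (Ne.symm hu₁) ?_).symm, hz a (Ne.symm hua) ?_, hab, hb⟩ <;>
        grind [ha.ne, hab.ne]
    · grind [List.nodup_cons, ha.ne, hab.ne, hb.ne]
  · rw [not_or] at hzu
    refine ⟨[c₁, a, b, u, c₂], ⟨?_, ?_, rfl, rfl, Or.inl ⟨[c₁], [u, c₂], rfl⟩⟩, le_rfl⟩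
    · simp only [List.isChain_cons_cons, List.isChain_singleton, and_true]
      exact ⟨ha, hab, (hz b (Ne.symm hub) (Ne.symm hzu.1)).symm,
        hz c₂ (Ne.symm hu₂) (Ne.symm hzu.2)⟩
    · grind [List.nodup_cons, ha.ne, hab.ne, hb.ne]

theorem exists_isPathThroughEdge_of_not_adj_not_adj (hc : c₁ ≠ c₂) (hne : ¬G.Adj c₁ c₂)
    (hI : ∀ v, v ≠ c₁ → v ≠ c₂ → ∃ z, AdjExcept G v z) (hc₁ : ∃ y, G.Adj c₁ y) (hab : G.Adj a b)
    (ha₁ : a ≠ c₁) (ha₂ : a ≠ c₂) (hb₁ : b ≠ c₁) (hb₂ : b ≠ c₂) (ha : ¬G.Adj c₁ a)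
    (hb : ¬G.Adj c₁ b) :
    ∃ l, IsPathThroughEdge G c₁ c₂ a b l ∧ 5 ≤ l.length := by
  obtain ⟨y, hy⟩ := hc₁
  have hya : y ≠ a := by rintro rfl; exact ha hy
  have hyb : y ≠ b := by rintro rfl; exact hb hy
  have hy₂ : y ≠ c₂ := by rintro rfl; exact hne hy
  obtain ⟨za, hza⟩ := hI a ha₁ ha₂
  obtain ⟨zb, hzb⟩ := hI b hb₁ hb₂
  have ha' := hza.of_compl_adj (z := c₁) ⟨ha₁, fun h => ha h.symm⟩
  have hb' := hzb.of_compl_adj (z := c₁) ⟨hb₁, fun h => hb h.symm⟩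
  refine ⟨[c₁, y, a, b, c₂], ⟨?_, ?_, rfl, rfl, Or.inl ⟨[c₁, y], [c₂], rfl⟩⟩, le_rfl⟩
  · simp only [List.isChain_cons_cons, List.isChain_singleton, and_true]
    exact ⟨hy, (ha' y hya hy.ne').symm, hab, hb' c₂ (Ne.symm hb₂) (Ne.symm hc)⟩
  · grind [List.nodup_cons, hy.ne, hab.ne]

theorem exists_isPathThroughEdge_of_ne [Fintype V] (hcard : 5 ≤ Fintype.card V) (hc : c₁ ≠ c₂)
    (hne : ¬G.Adj c₁ c₂) (hI : ∀ v, v ≠ c₁ → v ≠ c₂ → ∃ z, AdjExcept G v z)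
    (hc₁ : ∃ y, G.Adj c₁ y) (hc₂ : ∃ y, G.Adj c₂ y) (hab : G.Adj a b)
    (ha₁ : a ≠ c₁) (ha₂ : a ≠ c₂) (hb₁ : b ≠ c₁) (hb₂ : b ≠ c₂) :
    ∃ l, IsPathThroughEdge G c₁ c₂ a b l ∧ 5 ≤ l.length := by
  by_cases hab₁₂ : G.Adj c₁ a ∧ G.Adj b c₂
  · exact exists_isPathThroughEdge_of_adj_adj hcard hc hI hab ha₂ hb₁ hab₁₂.1 hab₁₂.2
  by_cases hba₁₂ : G.Adj c₁ b ∧ G.Adj a c₂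
  · obtain ⟨l, hl, hlen⟩ :=
      exists_isPathThroughEdge_of_adj_adj hcard hc hI hab.symm hb₂ ha₁ hba₁₂.1 hba₁₂.2
    exact ⟨l, hl.swap, hlen⟩
  obtain ⟨za, hza⟩ := hI a ha₁ ha₂
  obtain ⟨zb, hzb⟩ := hI b hb₁ hb₂
  have ha := hza.adj_or_adj hc ha₁.symm ha₂.symm
  have hb := hzb.adj_or_adj hc hb₁.symm hb₂.symm
  rw [G.adj_comm a] at ha
  rw [G.adj_comm b c₁] at hb
  rcases (by tauto : (¬G.Adj c₁ a ∧ ¬G.Adj c₁ b) ∨ (¬G.Adj a c₂ ∧ ¬G.Adj b c₂)) with h₁ | h₂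
  · exact exists_isPathThroughEdge_of_not_adj_not_adj hc hne hI hc₁ hab ha₁ ha₂ hb₁ hb₂ h₁.1 h₁.2
  · obtain ⟨l, hl, hlen⟩ := exists_isPathThroughEdge_of_not_adj_not_adj hc.symm
      (fun h => hne h.symm) (fun v h₂ h₁ => hI v h₁ h₂) hc₂ hab.symm hb₂ hb₁ ha₂ ha₁
      (fun h => h₂.2 h.symm) (fun h => h₂.1 h.symm)
    exact ⟨l.reverse, hl.reverse.swap, by simpa using hlen⟩

theorem exists_isPathThroughEdge [Fintype V] (hcard : 6 ≤ Fintype.card V) (hc : c₁ ≠ c₂)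
    (hne : ¬G.Adj c₁ c₂) (hI : ∀ v, v ≠ c₁ → v ≠ c₂ → ∃! z, Gᶜ.Adj v z)
    (hc₁ : ∃ y, G.Adj c₁ y) (hc₂ : ∃ y, G.Adj c₂ y) (hab : G.Adj a b) :
    ∃ l, IsPathThroughEdge G c₁ c₂ a b l ∧ 5 ≤ l.length := by
  have hI₁₂ : ∀ v, v ≠ c₁ → v ≠ c₂ → ∃ z, AdjExcept G v z :=
    fun v h₁ h₂ => adjExcept_of_existsUnique (hI v h₁ h₂)
  have hI₂₁ : ∀ v, v ≠ c₂ → v ≠ c₁ → ∃ z, AdjExcept G v z := fun v h₂ h₁ => hI₁₂ v h₁ h₂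
  have hne' : ¬G.Adj c₂ c₁ := fun h => hne h.symm
  rcases eq_or_ne a c₁ with rfl | ha₁
  · have hb₂ : b ≠ c₂ := by rintro rfl; exact hne hab
    obtain ⟨z, hz, -⟩ := hI b hab.ne' hb₂
    exact exists_isPathThroughEdge_of_adj_left hcard hc hne hI₁₂ hc₂ hab hb₂ hz
  rcases eq_or_ne b c₁ with rfl | hb₁
  · have ha₂ : a ≠ c₂ := by rintro rfl; exact hne' hab
    obtain ⟨z, hz, -⟩ := hI a ha₁ ha₂
    obtain ⟨l, hl, hlen⟩ :=
      exists_isPathThroughEdge_of_adj_left hcard hc hne hI₁₂ hc₂ hab.symm ha₂ hz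
    exact ⟨l, hl.swap, hlen⟩
  rcases eq_or_ne a c₂ with rfl | ha₂
  · obtain ⟨z, hz, -⟩ := hI b hb₁ hab.ne'
    obtain ⟨l, hl, hlen⟩ :=
      exists_isPathThroughEdge_of_adj_left hcard hc.symm hne' hI₂₁ hc₁ hab hb₁ hz
    exact ⟨l.reverse, hl.reverse, by simpa using hlen⟩
  rcases eq_or_ne b c₂ with rfl | hb₂
  · obtain ⟨z, hz, -⟩ := hI a ha₁ ha₂
    obtain ⟨l, hl, hlen⟩ :=
      exists_isPathThroughEdge_of_adj_left hcard hc.symm hne' hI₂₁ hc₁ hab.symm ha₁ hz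
    exact ⟨l.reverse, hl.reverse.swap, by simpa using hlen⟩
  exact exists_isPathThroughEdge_of_ne (by omega) hc hne hI₁₂ hc₁ hc₂ hab ha₁ ha₂ hb₁ hb₂

end HamiltonPath

/-- Proposition 4.1 (i): Hamilton path from `c₁` to `c₂` through any edge. -/
theorem stmt_11 {V : Type*} [Fintype V] (G : SimpleGraph V) (hcon : G.Connected)
    (hcard : 6 ≤ Fintype.card V) (c₁ c₂ : V) (hc : c₁ ≠ c₂) (hne : ¬G.Adj c₁ c₂)
    (hdeg : ∀ v : V, v ≠ c₁ → v ≠ c₂ → (G.neighborSet v).ncard = Fintype.card V - 2)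
    (a b : V) (hab : G.Adj a b) :
    ∃ x : ℕ → V, IsIndexedPath G x (Fintype.card V) ∧
      x 1 = c₁ ∧ x (Fintype.card V) = c₂ ∧
      ∃ i, 1 ≤ i ∧ i < Fintype.card V ∧
        ((x i = a ∧ x (i + 1) = b) ∨ (x i = b ∧ x (i + 1) = a)) := by
  have : Nontrivial V := Fintype.one_lt_card_iff_nontrivial.1 (by omega)
  have hI : ∀ v, v ≠ c₁ → v ≠ c₂ → ∃! z, Gᶜ.Adj v z := fun v h₁ h₂ =>
    existsUnique_compl_adj_of_ncard_neighborSet (by omega) (hdeg v h₁ h₂)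
  obtain ⟨l₀, hl₀, hlen₀⟩ := exists_isPathThroughEdge hcard hc hne hI
    (hcon.preconnected.exists_adj_of_nontrivial c₁)
    (hcon.preconnected.exists_adj_of_nontrivial c₂) hab
  obtain ⟨l, hl, hall⟩ :=
    hl₀.exists_forall_mem hlen₀ fun v h₁ h₂ => adjExcept_of_existsUnique (hI v h₁ h₂)
  have hlen : l.length = Fintype.card V := by
    classical
    rw [← Fintype.card_fin l.length]
    exact Fintype.card_congr (hl.nodup.getEquivOfForallMemList l hall)
  rw [← hlen]
  exact hl.exists_isIndexedPath
end

section
/- Let G be a connected simple graph on n ≥ 6 vertices, let c₁c₂ be a non-edge of G, and suppose every vertex of G other than c₁ and c₂ has degree exactly n-2. Then for every vertex v ∈ V(G) \ {c₁, c₂} there is a path in G on n-1 vertices starting at v and ending at c₁ or at c₂. -/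
open SimpleGraph

variable {V : Type*}

/-!
Every vertex outside `{c₁, c₂}` misses exactly one other vertex, so on `T = V \ {c₁, c₂}` the
graph is the complement of a partial matching. Since `|T| ≥ 4`, such a graph has a path from any
`v` through all of `T`: start with a path `v a b` and insert the remaining vertices one at a time;
a new vertex `w` can be appended at the end unless its non-neighbour is the last vertex, in
which case it fits right after `v`. The last vertex of that path misses at most one vertex, so
it is adjacent to `c₁` or `c₂` and the path extends to it.
-/

namespace SimpleGraph

variable {G : SimpleGraph V}

theorem subsingleton_compl_neighborSet_of_ncard_eq [Fintype V] {a : V}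
    (h : (G.neighborSet a).ncard = Fintype.card V - 2) : (Gᶜ.neighborSet a).Subsingleton := by
  have hunion : (G.neighborSet a ∪ {a}).ncard = Fintype.card V - 2 + 1 := by
    rw [Set.ncard_union_eq (by simp), h, Set.ncard_singleton]
  rw [← Set.ncard_le_one_iff_subsingleton, neighborSet_compl, Set.sdiff_eq, ← Set.compl_union,
    Set.ncard_compl, hunion, Nat.card_eq_fintype_card]
  omega

theorem exists_adj_of_one_lt_card {S : Set V} {T : Finset V} {a : V}
    (hS : (Gᶜ.neighborSet a ∩ S).Subsingleton) (hTS : ↑T ⊆ S) (haT : a ∉ T)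
    (hT : 1 < T.card) :
    ∃ b ∈ T, G.Adj a b := by
  obtain ⟨b, hb, c, hc, hbc⟩ := Finset.one_lt_card.1 hT
  by_contra! hnadj
  have hmem : ∀ x ∈ T, x ∈ Gᶜ.neighborSet a ∩ S := fun x hx =>
    ⟨(compl_adj G a x).2 ⟨fun h => haT (h ▸ hx), hnadj x hx⟩, hTS hx⟩
  exact hbc (hS (hmem b hb) (hmem c hc))

theorem exists_perm_isChain_adj_insert {v w : V} {l : List V} (hl : 2 ≤ l.length)
    (hnd : (v :: l).Nodup) (hchain : (v :: l).IsChain G.Adj) (hw : w ∉ v :: l)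
    (hsub : (Gᶜ.neighborSet w ∩ {x | x ∈ v :: l}).Subsingleton) :
    ∃ l', l'.Perm (w :: l) ∧ (v :: l').IsChain G.Adj := by
  obtain ⟨a, b, r, rfl⟩ : ∃ a b r, l = a :: b :: r := by
    match l, hl with
    | a :: b :: r, _ => exact ⟨a, b, r, rfl⟩
  set z := (b :: r).getLast (List.cons_ne_nil _ _)
  have hz : z ∈ b :: r := List.getLast_mem _
  by_cases hwz : G.Adj z w
  · refine ⟨a :: b :: r ++ [w], List.perm_append_singleton _ _,
      hchain.append (List.isChain_singleton w) fun x hx y hy => ?_⟩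
    simp only [List.getLast?_cons_cons, List.head?_cons, Option.mem_some_iff] at hx hy
    rw [List.getLast?_eq_some_getLast (List.cons_ne_nil _ _), Option.mem_some_iff] at hx
    exact hx ▸ hy ▸ hwz
  · -- `z` is the only non-neighbour of `w` on the path, so `w` fits between `v` and `a`.
    have hadj : ∀ x ∈ v :: a :: b :: r, x ≠ z → G.Adj w x := fun x hx hxz => by
      by_contra hwx
      have hz' : z ∈ v :: a :: b :: r := List.mem_cons_of_mem _ (List.mem_cons_of_mem _ hz)
      exact hxz (hsub ⟨(compl_adj G w x).2 ⟨fun e => hw (e ▸ hx), hwx⟩, hx⟩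
        ⟨(compl_adj G w z).2 ⟨fun e => hw (e ▸ hz'), fun e => hwz e.symm⟩, hz'⟩)
    rw [List.nodup_cons, List.nodup_cons] at hnd
    have hvz : v ≠ z := fun e => hnd.1 (List.mem_cons_of_mem _ (e ▸ hz))
    have haz : a ≠ z := fun e => hnd.2.1 (e ▸ hz)
    refine ⟨w :: a :: b :: r, List.Perm.refl _, ?_⟩
    rw [List.isChain_cons_cons] at hchain ⊢
    exact ⟨(hadj v (by simp) hvz).symm,
      List.isChain_cons_cons.2 ⟨hadj a (by simp) haz, hchain.2⟩⟩

theorem exists_isChain_adj_toFinset_eq [DecidableEq V] {S : Finset V} (hS : 4 ≤ S.card)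
    (hsub : ∀ a ∈ S, (Gᶜ.neighborSet a ∩ S).Subsingleton) {v : V} (hv : v ∈ S) :
    ∃ l, (v :: l).Nodup ∧ (v :: l).toFinset = S ∧ (v :: l).IsChain G.Adj := by
  obtain ⟨a, ha, hva⟩ := exists_adj_of_one_lt_card (hsub v hv)
    (Finset.coe_subset.2 (S.erase_subset v)) (S.notMem_erase v)
    (by rw [Finset.card_erase_of_mem hv]; omega)
  obtain ⟨b, hb, hab⟩ := exists_adj_of_one_lt_card (hsub a (Finset.mem_of_mem_erase ha))
    (Finset.coe_subset.2 (((S.erase v).erase_subset a).trans (S.erase_subset v)))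
    ((S.erase v).notMem_erase a)
    (by rw [Finset.card_erase_of_mem ha, Finset.card_erase_of_mem hv]; omega)
  have hvab : {v, a, b} ⊆ S := by
    simp only [Finset.insert_subset_iff, Finset.singleton_subset_iff]
    exact ⟨hv, Finset.mem_of_mem_erase ha, Finset.mem_of_mem_erase (Finset.mem_of_mem_erase hb)⟩
  suffices ∃ l, (v :: l).Nodup ∧ (v :: l).toFinset = {v, a, b} ∪ (S \ {v, a, b}) ∧
      (v :: l).IsChain G.Adj ∧ 2 ≤ l.length by
    obtain ⟨l, hnd, hfin, hch, -⟩ := this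
    exact ⟨l, hnd, hfin.trans (Finset.union_sdiff_of_subset hvab), hch⟩
  refine Finset.induction_on' (S \ {v, a, b}) ?_ fun w R hw hR hwR ih => ?_
  · have hvb : v ≠ b := (Finset.ne_of_mem_erase (Finset.mem_of_mem_erase hb)).symm
    refine ⟨[a, b], by simp [hva.ne, hab.ne, hvb], by simp,
      List.isChain_cons_cons.2 ⟨hva, List.isChain_pair.2 hab⟩, le_rfl⟩
  obtain ⟨l, hnd, hfin, hch, hlen⟩ := ih
  have hwl : w ∉ v :: l := by
    rw [← List.mem_toFinset, hfin, Finset.mem_union, not_or]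
    exact ⟨(Finset.mem_sdiff.1 hw).2, hwR⟩
  obtain ⟨l', hperm, hch'⟩ := exists_perm_isChain_adj_insert hlen hnd hch hwl
    ((hsub w (Finset.mem_sdiff.1 hw).1).anti (Set.inter_subset_inter_right _ fun x hx =>
      Finset.union_subset hvab (hR.trans Finset.sdiff_subset) (hfin ▸ List.mem_toFinset.2 hx)))
  have hperm' : (v :: l').Perm (w :: v :: l) := (hperm.cons v).trans (List.Perm.swap _ _ _)
  refine ⟨l', hperm'.nodup_iff.2 (List.nodup_cons.2 ⟨hwl, hnd⟩), ?_, hch', ?_⟩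
  · rw [List.toFinset_eq_of_perm _ _ hperm', List.toFinset_cons, hfin, Finset.union_insert]
  · rw [hperm.length_eq]
    exact hlen.trans (Nat.le_succ _)

end SimpleGraph

theorem isIndexedPath_getD {G : SimpleGraph V} {L : List V} (hnd : L.Nodup)
    (hch : L.IsChain G.Adj) (d : V) : IsIndexedPath G (fun i => L.getD (i - 1) d) L.length := by
  refine ⟨fun i j hi hi' hj hj' hij => ?_, fun i hi hi' => ?_⟩
  · dsimp only at hij
    rw [List.getD_eq_getElem _ _ (by omega), List.getD_eq_getElem _ _ (by omega)] at hij
    have := hnd.getElem_inj_iff.1 hij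
    omega
  · obtain ⟨k, rfl⟩ : ∃ k, i = k + 1 := ⟨i - 1, by omega⟩
    simp only [Nat.add_sub_cancel]
    rw [List.getD_eq_getElem _ _ (by omega), List.getD_eq_getElem _ _ (by omega)]
    exact List.isChain_iff_getElem.1 hch k (by omega)

theorem exists_isIndexedPath_concat {G : SimpleGraph V} {v c : V} {l : List V}
    (hnd : (v :: l).Nodup) (hch : (v :: l).IsChain G.Adj) (hc : c ∉ v :: l)
    (hadj : G.Adj ((v :: l).getLast (List.cons_ne_nil _ _)) c) :
    ∃ x : ℕ → V, IsIndexedPath G x (l.length + 2) ∧ x 1 = v ∧ x (l.length + 2) = c := by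
  have hchain : (v :: l ++ [c]).IsChain G.Adj :=
    hch.append (List.isChain_singleton c) fun x hx y hy => by
      rw [List.getLast?_eq_some_getLast (List.cons_ne_nil _ _), Option.mem_some_iff] at hx
      simp only [List.head?_cons, Option.mem_some_iff] at hy
      exact hx ▸ hy ▸ hadj
  have hpath := isIndexedPath_getD
    ((List.perm_append_singleton c _).nodup_iff.2 (List.nodup_cons.2 ⟨hc, hnd⟩)) hchain v
  rw [List.length_append, List.length_cons, List.length_singleton] at hpath
  exact ⟨_, hpath, rfl, by simp⟩

theorem stmt_12_general {V : Type*} [Fintype V] (G : SimpleGraph V)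
    (hcard : 6 ≤ Fintype.card V) (c₁ c₂ : V) (hc : c₁ ≠ c₂)
    (hdeg : ∀ v : V, v ≠ c₁ → v ≠ c₂ → (G.neighborSet v).ncard = Fintype.card V - 2)
    (v : V) (hv1 : v ≠ c₁) (hv2 : v ≠ c₂) :
    ∃ x : ℕ → V, IsIndexedPath G x (Fintype.card V - 1) ∧ x 1 = v ∧
      (x (Fintype.card V - 1) = c₁ ∨ x (Fintype.card V - 1) = c₂) := by
  classical
  set T : Finset V := Finset.univ \ {c₁, c₂}
  have hmemT : ∀ a, a ∈ T ↔ a ≠ c₁ ∧ a ≠ c₂ := by simp [T]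
  have hsub : ∀ a ∈ T, (Gᶜ.neighborSet a).Subsingleton := fun a ha =>
    subsingleton_compl_neighborSet_of_ncard_eq (hdeg a ((hmemT a).1 ha).1 ((hmemT a).1 ha).2)
  have hTcard : T.card = Fintype.card V - 2 := by
    rw [Finset.card_sdiff_of_subset (Finset.subset_univ _), Finset.card_univ, Finset.card_pair hc]
  obtain ⟨l, hnd, hfin, hch⟩ := G.exists_isChain_adj_toFinset_eq (S := T) (by omega)
    (fun a ha => (hsub a ha).anti Set.inter_subset_left) ((hmemT v).2 ⟨hv1, hv2⟩)
  have hlast : (v :: l).getLast (List.cons_ne_nil _ _) ∈ T :=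
    hfin ▸ List.mem_toFinset.2 (List.getLast_mem _)
  obtain ⟨c, hc12, hadj⟩ := G.exists_adj_of_one_lt_card (S := Set.univ) (T := {c₁, c₂})
    (by simpa using hsub _ hlast) (Set.subset_univ _) (by simpa using (hmemT _).1 hlast)
    (by rw [Finset.card_pair hc]; norm_num)
  have hcl : c ∉ v :: l := by
    rw [← List.mem_toFinset, hfin, hmemT]
    simp only [Finset.mem_insert, Finset.mem_singleton] at hc12
    tauto
  have hlen : l.length + 2 = Fintype.card V - 1 := by
    have := List.toFinset_card_of_nodup hnd
    rw [hfin, hTcard, List.length_cons] at this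
    omega
  obtain ⟨x, hx, hx1, hxc⟩ := exists_isIndexedPath_concat hnd hch hcl hadj
  rw [hlen] at hx hxc
  exact ⟨x, hx, hx1, by simpa [hxc] using hc12⟩

/-- Proposition 4.1 (ii): an `(n-1)`-vertex path from any inner vertex to `{c₁, c₂}`. -/
theorem stmt_12 {V : Type*} [Fintype V] (G : SimpleGraph V) (hcon : G.Connected)
    (hcard : 6 ≤ Fintype.card V) (c₁ c₂ : V) (hc : c₁ ≠ c₂) (hne : ¬G.Adj c₁ c₂)
    (hdeg : ∀ v : V, v ≠ c₁ → v ≠ c₂ → (G.neighborSet v).ncard = Fintype.card V - 2)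
    (v : V) (hv1 : v ≠ c₁) (hv2 : v ≠ c₂) :
    ∃ x : ℕ → V, IsIndexedPath G x (Fintype.card V - 1) ∧ x 1 = v ∧
      (x (Fintype.card V - 1) = c₁ ∨ x (Fintype.card V - 1) = c₂) :=
  stmt_12_general G hcard c₁ c₂ hc hdeg v hv1 hv2
end
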